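/- Let p = [b_1^{a_1} ⋯ b_r^{a_r}] (b_1 ≥ ⋯ ≥ b_r) be an orthogonal partition of 2n in which every b_i is odd, so that 2n* = Σ_i a_i is even. Then with P := [p_1 p_1 (2n*−1) 1] one has the exact identity P^t = p^{+-}, i.e. P^t = [(b_1+1) b_1^{a_1−1} b_2^{a_2} ⋯ b_{r−1}^{a_{r−1}} b_r^{a_r−1} (b_r−1)]. -/

import Mathlib

namespace JiangWF

/-- `sCount p i` : the number of parts of `p` that are `≥ i`. -/
def sCount (p : Multiset ℕ) (i : ℕ) : ℕ := (p.filter (fun a => i ≤ a)).card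

/-- `rCount p i` : the number of parts of `p` equal to `i`. -/
def rCount (p : Multiset ℕ) (i : ℕ) : ℕ := p.count i

/-- The largest part of `p` (`0` for the empty partition). -/
def maxPart (p : Multiset ℕ) : ℕ := p.sup

/-- The smallest part of `p` (`0` for the empty partition). -/
noncomputable def minPart (p : Multiset ℕ) : ℕ := sInf {a : ℕ | a ∈ p}

/-- The transpose partition: its `i`-th part is `sCount p i`, for `1 ≤ i ≤ maxPart p`. -/
def transpose (p : Multiset ℕ) : Multiset ℕ :=
  (Multiset.range (maxPart p)).map fun i => sCount p (i + 1)

/-- The sum of the `m` largest parts of `p`. -/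
def topSum (p : Multiset ℕ) (m : ℕ) : ℕ :=
  ∑ i ∈ Finset.Icc 1 p.sum, min m (sCount p i)

/-- Dominance order: `domLE p q` means `p ≤ q`. -/
def domLE (p q : Multiset ℕ) : Prop := ∀ m, topSum p m ≤ topSum q m

/-- `p` is a partition of `N`: all parts positive, summing to `N`. -/
def IsPartitionOf (p : Multiset ℕ) (N : ℕ) : Prop := (∀ a ∈ p, 0 < a) ∧ p.sum = N

/-- Symplectic partition: every odd part occurs with even multiplicity. -/
def IsSymplectic (p : Multiset ℕ) : Prop := ∀ a, a % 2 = 1 → Even (p.count a)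

/-- Orthogonal partition: every even part occurs with even multiplicity. -/
def IsOrthogonal (p : Multiset ℕ) : Prop := ∀ a, a % 2 = 0 → Even (p.count a)

/-- `p^-`: decrease the smallest part by one (deleting it if it becomes `0`). -/
noncomputable def pMinus (p : Multiset ℕ) : Multiset ℕ :=
  if minPart p ≤ 1 then p.erase (minPart p)
  else (minPart p - 1) ::ₘ p.erase (minPart p)

/-- `p^+`: increase the largest part by one. -/
def pPlus (p : Multiset ℕ) : Multiset ℕ := (maxPart p + 1) ::ₘ p.erase (maxPart p)

/-- `p^{+-}`: increase the largest part by one and decrease the smallest by one. -/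
noncomputable def pPM (p : Multiset ℕ) : Multiset ℕ := pMinus (pPlus p)

/-- `p₁ = [⌊b_1/2⌋^{a_1} ⋯ ⌊b_r/2⌋^{a_r}]^t` (discarding zero entries before transposing). -/
def pOne (p : Multiset ℕ) : Multiset ℕ :=
  transpose ((p.map fun b => b / 2).filter fun x => 0 < x)

/-- `Σ_{i : b_i odd} a_i`: the number of odd parts of `p`. -/
def oddMult (p : Multiset ℕ) : ℕ := (p.filter fun a => a % 2 = 1).card

/-- `n* = ⌊(Σ_{i : b_i odd} a_i)/2⌋`. -/
def nStar (p : Multiset ℕ) : ℕ := oddMult p / 2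

/-- Append an extra part `m` to `q`, omitted if `m = 0`. -/
def addPart (m : ℕ) (q : Multiset ℕ) : Multiset ℕ := if m = 0 then q else m ::ₘ q

/-- `c` is the `Sp`-collapse of `p`: the maximal symplectic partition `≤ p` in dominance. -/
def IsSpCollapse (p c : Multiset ℕ) : Prop :=
  IsPartitionOf c p.sum ∧ IsSymplectic c ∧ domLE c p ∧
    ∀ c', IsPartitionOf c' p.sum → IsSymplectic c' → domLE c' p → domLE c' c

/-- `c` is the `SO`-collapse of `p`: the maximal orthogonal partition `≤ p` in dominance. -/
def IsSOCollapse (p c : Multiset ℕ) : Prop :=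
  IsPartitionOf c p.sum ∧ IsOrthogonal c ∧ domLE c p ∧
    ∀ c', IsPartitionOf c' p.sum → IsOrthogonal c' → domLE c' p → domLE c' c

/-- `e` is the `Sp`-expansion of `p`: the minimal special symplectic partition `≥ p`. -/
def IsSpExpansion (p e : Multiset ℕ) : Prop :=
  IsPartitionOf e p.sum ∧ IsSymplectic e ∧ IsSymplectic (transpose e) ∧ domLE p e ∧
    ∀ e', IsPartitionOf e' p.sum → IsSymplectic e' → IsSymplectic (transpose e') →
      domLE p e' → domLE e e'

/-- `e` is the `SO_{2n+1}`-expansion of `p`: the minimal special orthogonal partition `≥ p`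
(odd case: special means the transpose is orthogonal). -/
def IsSOOddExpansion (p e : Multiset ℕ) : Prop :=
  IsPartitionOf e p.sum ∧ IsOrthogonal e ∧ IsOrthogonal (transpose e) ∧ domLE p e ∧
    ∀ e', IsPartitionOf e' p.sum → IsOrthogonal e' → IsOrthogonal (transpose e') →
      domLE p e' → domLE e e'

/-- `e` is the `SO_{2n}`-expansion of `p`: the minimal special orthogonal partition `≥ p`
(even case: special means the transpose is symplectic). -/
def IsSOEvenExpansion (p e : Multiset ℕ) : Prop :=
  IsPartitionOf e p.sum ∧ IsOrthogonal e ∧ IsSymplectic (transpose e) ∧ domLE p e ∧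
    ∀ e', IsPartitionOf e' p.sum → IsOrthogonal e' → IsSymplectic (transpose e') →
      domLE p e' → domLE e e'

/-- `dim_C(q)` for a symplectic partition `q` of `2k`:
`2k² + k − (1/2)Σ s_i(q)² − (1/2)Σ_{i odd} r_i(q)` (note `2k² + k = (|q|² + |q|)/2`). -/
def dimC (p : Multiset ℕ) : ℚ :=
  ((p.sum : ℚ) ^ 2 + (p.sum : ℚ)) / 2
    - (∑ i ∈ Finset.Icc 1 p.sum, (sCount p i : ℚ) ^ 2) / 2
    - (∑ i ∈ Finset.Icc 1 p.sum, if i % 2 = 1 then (rCount p i : ℚ) else 0) / 2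

/-- `dim_B(q)` for an orthogonal partition `q` of `2k+1`:
`2k² + k − (1/2)Σ s_i(q)² + (1/2)Σ_{i odd} r_i(q)` (note `2k² + k = (|q|² − |q|)/2`). -/
def dimB (p : Multiset ℕ) : ℚ :=
  ((p.sum : ℚ) ^ 2 - (p.sum : ℚ)) / 2
    - (∑ i ∈ Finset.Icc 1 p.sum, (sCount p i : ℚ) ^ 2) / 2
    + (∑ i ∈ Finset.Icc 1 p.sum, if i % 2 = 1 then (rCount p i : ℚ) else 0) / 2

/-- `dim_D(q)` for an orthogonal partition `q` of `2k`:
`2k² − k − (1/2)Σ s_i(q)² + (1/2)Σ_{i odd} r_i(q)` (note `2k² − k = (|q|² − |q|)/2`). -/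
def dimD (p : Multiset ℕ) : ℚ :=
  ((p.sum : ℚ) ^ 2 - (p.sum : ℚ)) / 2
    - (∑ i ∈ Finset.Icc 1 p.sum, (sCount p i : ℚ) ^ 2) / 2
    + (∑ i ∈ Finset.Icc 1 p.sum, if i % 2 = 1 then (rCount p i : ℚ) else 0) / 2

/-!
Since all parts of `p` are odd, columns `2u` and `2u + 1` of its Young diagram have the same
length, so `pᵗ = [k p₁ p₁]` with `k = |p| = 2n*`. Passing to `p^{+-}` moves the last cell of the
last row to the end of the first row; on the transpose this shortens one column of length `k` by
one and adds a column of length one, whence `p^{+-} = [(k - 1) 1 p₁ p₁]ᵗ`. Transposes are compared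
through the column counts `sCount`, between which transposition is a Galois connection.
-/

lemma sCount_eq_countP (p : Multiset ℕ) (i : ℕ) : sCount p i = p.countP (i ≤ ·) := by
  rw [sCount, Multiset.countP_eq_card_filter]

lemma sCount_cons (a : ℕ) (p : Multiset ℕ) (i : ℕ) :
    sCount (a ::ₘ p) i = (if i ≤ a then 1 else 0) + sCount p i := by
  simp only [sCount_eq_countP, Multiset.countP_cons]
  omega

lemma sCount_le_card (p : Multiset ℕ) (i : ℕ) : sCount p i ≤ Multiset.card p :=
  Multiset.card_le_card (Multiset.filter_le _ p)

lemma sCount_antitone (p : Multiset ℕ) : Antitone (sCount p) := fun _ _ hij =>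
  Multiset.card_le_card (Multiset.monotone_filter_right p fun _ hb => hij.trans hb)

lemma sCount_eq_count_add_sCount_succ (p : Multiset ℕ) (i : ℕ) :
    sCount p i = p.count i + sCount p (i + 1) := by
  induction p using Multiset.induction_on with
  | empty => simp [sCount]
  | cons a t ih =>
    rw [sCount_cons, sCount_cons, Multiset.count_cons, ih]
    split_ifs <;> omega

lemma sCount_one (p : Multiset ℕ) (hpos : ∀ a ∈ p, 0 < a) : sCount p 1 = Multiset.card p := by
  rw [sCount_eq_countP, Multiset.countP_eq_card]
  exact hpos

lemma eq_of_sCount_eq {p q : Multiset ℕ} (hp : 0 ∉ p) (hq : 0 ∉ q)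
    (h : ∀ i, 1 ≤ i → sCount p i = sCount q i) : p = q := by
  ext a
  rcases Nat.eq_zero_or_pos a with rfl | ha
  · rw [Multiset.count_eq_zero_of_notMem hp, Multiset.count_eq_zero_of_notMem hq]
  · have := h a ha
    have := h (a + 1) (by omega)
    have := sCount_eq_count_add_sCount_succ p a
    have := sCount_eq_count_add_sCount_succ q a
    omega

lemma maxPart_mem {p : Multiset ℕ} (hp : p ≠ 0) : maxPart p ∈ p := by
  obtain ⟨y, hy, hmax⟩ := p.exists_max_image id hp
  rwa [maxPart, le_antisymm (Multiset.sup_le.mpr hmax) (Multiset.le_sup hy)]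

lemma le_maxPart {p : Multiset ℕ} {a : ℕ} (ha : a ∈ p) : a ≤ maxPart p := Multiset.le_sup ha

lemma minPart_mem {p : Multiset ℕ} (hp : p ≠ 0) : minPart p ∈ p :=
  Nat.sInf_mem (Multiset.exists_mem_of_ne_zero hp)

lemma minPart_le {p : Multiset ℕ} {a : ℕ} (ha : a ∈ p) : minPart p ≤ a := Nat.sInf_le ha

lemma minPart_eq {p : Multiset ℕ} {m : ℕ} (hm : m ∈ p) (hle : ∀ a ∈ p, m ≤ a) :
    minPart p = m :=
  le_antisymm (minPart_le hm) (hle _ (minPart_mem (by rintro rfl; simp at hm)))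

lemma one_le_sCount_iff (p : Multiset ℕ) {i : ℕ} (hi : 1 ≤ i) :
    1 ≤ sCount p i ↔ i ≤ maxPart p := by
  rw [sCount, Nat.one_le_iff_ne_zero, Ne, Multiset.card_eq_zero, Multiset.filter_eq_nil]
  push Not
  refine ⟨fun ⟨a, ha, hia⟩ => hia.trans (le_maxPart ha), fun h => ⟨maxPart p, ?_, h⟩⟩
  exact maxPart_mem (by rintro rfl; simp [maxPart] at h; omega)

lemma sCount_eq_card_iff {p : Multiset ℕ} (hp : p ≠ 0) (i : ℕ) :
    sCount p i = Multiset.card p ↔ i ≤ minPart p := by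
  rw [sCount_eq_countP, Multiset.countP_eq_card]
  exact ⟨fun h => h _ (minPart_mem hp), fun h a ha => h.trans (minPart_le ha)⟩

lemma sCount_transpose (X : Multiset ℕ) (j : ℕ) :
    sCount (transpose X) j
      = ((Finset.range (maxPart X)).filter (fun t => j ≤ sCount X (t + 1))).card := by
  rw [sCount_eq_countP, transpose, Multiset.countP_map]
  rfl

lemma card_transpose (X : Multiset ℕ) : Multiset.card (transpose X) = maxPart X := by
  rw [transpose, Multiset.card_map, Multiset.card_range]

lemma zero_notMem_transpose (X : Multiset ℕ) : 0 ∉ transpose X := by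
  rw [transpose, Multiset.mem_map]
  rintro ⟨t, ht, h0⟩
  have := (one_le_sCount_iff X (i := t + 1) (by omega)).mpr (Multiset.mem_range.mp ht)
  omega

lemma sCount_transpose_one (X : Multiset ℕ) : sCount (transpose X) 1 = maxPart X := by
  rw [sCount_one _ fun a ha => Nat.pos_of_ne_zero fun h => zero_notMem_transpose X (h ▸ ha),
    card_transpose]

/-- `j ≤ sCount X i` says that the cell in row `j` and column `i` lies in the diagram of `X`. -/
lemma le_sCount_transpose_iff (X : Multiset ℕ) {i j : ℕ} (hi : 1 ≤ i) (hj : 1 ≤ j) :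
    i ≤ sCount (transpose X) j ↔ j ≤ sCount X i := by
  rw [sCount_transpose]
  constructor
  · intro h
    by_contra hlt
    have hsub : (Finset.range (maxPart X)).filter (fun t => j ≤ sCount X (t + 1))
        ⊆ Finset.range (i - 1) := by
      intro t ht
      rw [Finset.mem_filter] at ht
      rw [Finset.mem_range]
      by_contra hti
      have := sCount_antitone X (show i ≤ t + 1 by omega)
      omega
    have := Finset.card_le_card hsub
    rw [Finset.card_range] at this
    omega
  · intro h
    have hiM : i ≤ maxPart X := (one_le_sCount_iff X hi).mp (hj.trans h)
    calc i = (Finset.range i).card := (Finset.card_range i).symm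
      _ ≤ _ := Finset.card_le_card fun t ht => by
        rw [Finset.mem_range] at ht
        rw [Finset.mem_filter, Finset.mem_range]
        exact ⟨by omega, h.trans (sCount_antitone X (show t + 1 ≤ i by omega))⟩

lemma sCount_pPlus {X : Multiset ℕ} (hX : X ≠ 0) (i : ℕ) :
    sCount (pPlus X) i = sCount X i + if i = maxPart X + 1 then 1 else 0 := by
  have h := sCount_cons (maxPart X) (X.erase (maxPart X)) i
  rw [Multiset.cons_erase (maxPart_mem hX)] at h
  rw [pPlus, sCount_cons]
  split_ifs at h ⊢ <;> omega

lemma sCount_pMinus {Y : Multiset ℕ} (hY : Y ≠ 0) {i : ℕ} (hi : 1 ≤ i) :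
    sCount (pMinus Y) i + (if i = minPart Y then 1 else 0) = sCount Y i := by
  have h := sCount_cons (minPart Y) (Y.erase (minPart Y)) i
  rw [Multiset.cons_erase (minPart_mem hY)] at h
  rw [pMinus]
  split_ifs <;> (try rw [sCount_cons]) <;> split_ifs at h ⊢ <;> omega

lemma minPart_pPlus {X : Multiset ℕ} (hX : 2 ≤ Multiset.card X) :
    minPart (pPlus X) = minPart X := by
  have hX0 : X ≠ 0 := by rintro rfl; simp at hX
  have hmM : minPart X ≤ maxPart X := le_maxPart (minPart_mem hX0)
  have herase : X.erase (maxPart X) ≠ 0 :=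
    Multiset.card_pos.mp (by rw [Multiset.card_erase_of_mem (maxPart_mem hX0), Nat.pred_eq_sub_one]; omega)
  apply minPart_eq
  · rw [pPlus]
    refine Multiset.mem_cons_of_mem ?_
    by_cases hm : minPart X = maxPart X
    · obtain ⟨b, hb⟩ := Multiset.exists_mem_of_ne_zero herase
      have hbX := Multiset.mem_of_mem_erase hb
      exact le_antisymm (hm ▸ le_maxPart hbX) (minPart_le hbX) ▸ hb
    · exact (Multiset.mem_erase_of_ne hm).mpr (minPart_mem hX0)
  · intro a ha
    rw [pPlus, Multiset.mem_cons] at ha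
    rcases ha with rfl | ha
    · omega
    · exact minPart_le (Multiset.mem_of_mem_erase ha)

lemma sCount_pPM {X : Multiset ℕ} (hX : 2 ≤ Multiset.card X) {i : ℕ} (hi : 1 ≤ i) :
    sCount (pPM X) i + (if i = minPart X then 1 else 0)
      = sCount X i + if i = maxPart X + 1 then 1 else 0 := by
  have hX0 : X ≠ 0 := by rintro rfl; simp at hX
  have hplus : pPlus X ≠ 0 := Multiset.cons_ne_zero
  rw [pPM, ← minPart_pPlus hX, sCount_pMinus hplus hi, sCount_pPlus hX0]

lemma pos_of_mem_pPM {X : Multiset ℕ} (hpos : ∀ a ∈ X, 0 < a) : ∀ a ∈ pPM X, 0 < a := by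
  have hplus : ∀ a ∈ pPlus X, 0 < a := by
    intro a ha
    rw [pPlus, Multiset.mem_cons] at ha
    rcases ha with rfl | ha
    · omega
    · exact hpos a (Multiset.mem_of_mem_erase ha)
  intro a ha
  rw [pPM, pMinus] at ha
  split_ifs at ha with hm
  · exact hplus a (Multiset.mem_of_mem_erase ha)
  · rw [Multiset.mem_cons] at ha
    rcases ha with rfl | ha
    · omega
    · exact hplus a (Multiset.mem_of_mem_erase ha)

lemma card_mem_transpose {X : Multiset ℕ} (hpos : ∀ a ∈ X, 0 < a) (hX : X ≠ 0) :
    Multiset.card X ∈ transpose X := by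
  rw [← sCount_one X hpos, transpose, Multiset.mem_map]
  exact ⟨0, Multiset.mem_range.mpr (hpos _ (maxPart_mem hX)), rfl⟩

theorem pPM_eq_transpose {X : Multiset ℕ} (hpos : ∀ a ∈ X, 0 < a) (hk : 2 ≤ Multiset.card X) :
    pPM X = transpose ((Multiset.card X - 1) ::ₘ 1 ::ₘ (transpose X).erase (Multiset.card X)) := by
  have hX : X ≠ 0 := by rintro rfl; simp at hk
  set k := Multiset.card X
  set Y := (k - 1) ::ₘ 1 ::ₘ (transpose X).erase k
  refine eq_of_sCount_eq (fun h => (pos_of_mem_pPM hpos 0 h).false) (zero_notMem_transpose Y)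
    fun i hi => eq_of_forall_le_iff fun c => ?_
  rcases Nat.eq_zero_or_pos c with rfl | hc
  · simp
  rw [le_sCount_transpose_iff Y hc hi]
  have hY : sCount Y c + (if c ≤ k then 1 else 0)
      = (if c ≤ k - 1 then 1 else 0) + (if c ≤ 1 then 1 else 0) + sCount (transpose X) c := by
    have h := sCount_cons k ((transpose X).erase k) c
    rw [Multiset.cons_erase (card_mem_transpose hpos hX)] at h
    rw [sCount_cons, sCount_cons, h]
    ring
  have hPM := sCount_pPM hk hi
  have hgal := le_sCount_transpose_iff X hi hc
  have hgal_succ := le_sCount_transpose_iff X (show 1 ≤ i + 1 by omega) hc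
  have hfirst_col : c = 1 → sCount (transpose X) c = maxPart X :=
    fun h => h ▸ sCount_transpose_one X
  have hfull := sCount_eq_card_iff hX i
  have hfull_succ := sCount_eq_card_iff hX (i + 1)
  have hle := sCount_le_card X i
  have hle_succ := sCount_le_card X (i + 1)
  have hrow := one_le_sCount_iff X hi
  have hmin_le_max := le_maxPart (minPart_mem hX)
  split_ifs at hY hPM <;> omega

lemma sum_mod_two_eq_card_mod_two {s : Multiset ℕ} (hodd : ∀ a ∈ s, a % 2 = 1) :
    s.sum % 2 = Multiset.card s % 2 := by
  induction s using Multiset.induction_on with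
  | empty => simp
  | cons a t ih =>
    have ha := hodd a (Multiset.mem_cons_self a t)
    have ht := ih fun b hb => hodd b (Multiset.mem_cons_of_mem hb)
    rw [Multiset.sum_cons, Multiset.card_cons]
    omega

lemma map_range_two_mul_add_one (F : ℕ → ℕ) (hF : ∀ u, F (2 * u + 2) = F (2 * u + 3)) (T : ℕ) :
    (Multiset.range (2 * T + 1)).map (fun i => F (i + 1))
      = F 1 ::ₘ ((Multiset.range T).map (fun u => F (2 * u + 2))
        + (Multiset.range T).map (fun u => F (2 * u + 2))) := by
  induction T with
  | zero => simp
  | succ T ih =>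
    rw [show 2 * (T + 1) + 1 = 2 * T + 1 + 1 + 1 by ring, Multiset.range_succ, Multiset.range_succ,
      Multiset.map_cons, Multiset.map_cons, ih, Multiset.range_succ, Multiset.map_cons,
      Multiset.cons_add, Multiset.add_cons, hF]
    simp only [Multiset.cons_swap]

lemma maxPart_filter_map_div_two (p : Multiset ℕ) :
    maxPart ((p.map (· / 2)).filter (0 < ·)) = maxPart p / 2 := by
  induction p using Multiset.induction_on with
  | empty => rfl
  | cons a t ih =>
    simp only [maxPart, Multiset.map_cons, Multiset.filter_cons, Multiset.sup_cons] at ih ⊢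
    split_ifs <;> simp only [Multiset.sup_add, Multiset.sup_singleton, Multiset.zero_add, ih] <;>
      omega

lemma sCount_filter_map_div_two (p : Multiset ℕ) (u : ℕ) :
    sCount ((p.map (· / 2)).filter (0 < ·)) (u + 1) = sCount p (2 * u + 2) := by
  rw [sCount_eq_countP, Multiset.countP_filter, Multiset.countP_map, sCount]
  congr 1
  exact Multiset.filter_congr fun b _ => by omega

theorem transpose_eq_card_cons_pOne_add_pOne {p : Multiset ℕ} (hne : p ≠ 0)
    (hodd : ∀ a ∈ p, a % 2 = 1) :
    transpose p = Multiset.card p ::ₘ (pOne p + pOne p) := by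
  have hpos : ∀ a ∈ p, 0 < a := fun a ha => by have := hodd a ha; omega
  have hM : maxPart p = 2 * (maxPart p / 2) + 1 := by have := hodd _ (maxPart_mem hne); omega
  have hpairs (u : ℕ) : sCount p (2 * u + 2) = sCount p (2 * u + 3) := by
    have hcount : p.count (2 * u + 2) = 0 :=
      Multiset.count_eq_zero_of_notMem fun h => by have := hodd _ h; omega
    rw [sCount_eq_count_add_sCount_succ, hcount, zero_add]
  rw [transpose, hM, map_range_two_mul_add_one _ hpairs, sCount_one p hpos, pOne, transpose,
    maxPart_filter_map_div_two]
  simp only [sCount_filter_map_div_two]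

theorem transpose_eq_pPM_of_odd_parts_general (n : ℕ) (p : Multiset ℕ) (hne : p ≠ 0)
    (hp : IsPartitionOf p (2 * n))
    (hodd : ∀ a ∈ p, a % 2 = 1) :
    Even (Multiset.card p) ∧ 2 * nStar p = Multiset.card p ∧
      transpose (addPart (2 * nStar p - 1) ((1 : ℕ) ::ₘ (pOne p + pOne p))) = pPM p := by
  have hcard : Multiset.card p % 2 = 0 := by
    rw [← sum_mod_two_eq_card_mod_two hodd, hp.2, Nat.mul_mod_right]
  have hcard_pos : 0 < Multiset.card p := Multiset.card_pos.mpr hne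
  have hnStar : 2 * nStar p = Multiset.card p := by
    rw [nStar, oddMult, Multiset.filter_eq_self.mpr hodd]
    omega
  refine ⟨Nat.even_iff.mpr hcard, hnStar, ?_⟩
  rw [pPM_eq_transpose hp.1 (by omega), transpose_eq_card_cons_pOne_add_pOne hne hodd,
    Multiset.erase_cons_head, addPart, if_neg (by omega), hnStar]

/-- `p` an orthogonal partition of `2n` all of whose parts are odd, so that
`2n* = Σ_i a_i` is even.  Then `P = [p₁ p₁ (2n*−1) 1]` satisfies `P^t = p^{+-}`. -/
theorem transpose_eq_pPM_of_odd_parts (n : ℕ) (p : Multiset ℕ) (hne : p ≠ 0)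
    (hp : IsPartitionOf p (2 * n)) (horth : IsOrthogonal p)
    (hodd : ∀ a ∈ p, a % 2 = 1) :
    Even (Multiset.card p) ∧ 2 * nStar p = Multiset.card p ∧
      transpose (addPart (2 * nStar p - 1) ((1 : ℕ) ::ₘ (pOne p + pOne p))) = pPM p :=
  transpose_eq_pPM_of_odd_parts_general n p hne hp hodd

end JiangWF
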